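/- Let (X_j, ξ_j), j ≥ 1, be i.i.d. ℝ²-valued random vectors with E[X₁] = 0 and E[X₁²] = σ² ∈ (0, ∞), and let (a_n) be a sequence of positive reals with a_n → ∞, a_n²/n → 0, and a_n² P(ξ₁ > n) → 0 as n → ∞. Set T_k = X₁ + ⋯ + X_k and fix T > 0. Then E[ sup_{k ≤ ⌊T a_n²⌋} | Σ_{j=1}^k X_j 1_{ξ_j > n} | / a_n ] → 0 as n → ∞. -/

import Mathlib

/-!
The maximum of the partial sums is at most the sum of the absolute values of the summands
`X_j 1_{ξ_j > n}`, which are identically distributed, so the expectation is at most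
`⌊T a_n²⌋ E[|X₁| 1_{ξ₁ > n}] ≤ T a_n² ‖X₁‖₂ P(ξ₁ > n)^{1/2}` by Cauchy–Schwarz.
After dividing by `a_n` this is `T ‖X₁‖₂ (a_n² P(ξ₁ > n))^{1/2} → 0`.
-/

open MeasureTheory ProbabilityTheory Real Filter

theorem Finset.sup'_range_abs_sum_Icc_le_sum_abs (f : ℕ → ℝ) (m : ℕ) :
    (Finset.range (m + 1)).sup' Finset.nonempty_range_add_one
        (fun k => |∑ j ∈ Finset.Icc 1 k, f j|) ≤ ∑ j ∈ Finset.Icc 1 m, |f j| :=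
  Finset.sup'_le _ _ fun _ hk => (Finset.abs_sum_le_sum_abs _ _).trans <|
    Finset.sum_le_sum_of_subset_of_nonneg
      (Finset.Icc_subset_Icc_right (Nat.lt_succ_iff.mp (Finset.mem_range.mp hk)))
      fun _ _ _ => abs_nonneg _

theorem Finset.sup'_range_abs_sum_Icc_nonneg (f : ℕ → ℝ) (m : ℕ) :
    0 ≤ (Finset.range (m + 1)).sup' Finset.nonempty_range_add_one
      (fun k => |∑ j ∈ Finset.Icc 1 k, f j|) :=
  Finset.le_sup'_of_le _ (Finset.mem_range.mpr m.succ_pos) (abs_nonneg _)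

section

variable {Ω : Type*} [MeasurableSpace Ω] {μ : Measure Ω}

theorem integral_abs_indicator_le_sqrt_mul_sqrt {f : Ω → ℝ} (hf : MemLp f 2 μ) {s : Set Ω}
    (hs : MeasurableSet s) (hμs : μ s ≠ ⊤) :
    ∫ ω, |s.indicator f ω| ∂μ ≤ √(∫ ω, f ω ^ 2 ∂μ) * √(μ.real s) := by
  have h2 : ENNReal.ofReal 2 = 2 := by norm_num
  have hholder := integral_mul_norm_le_Lp_mul_Lq HolderConjugate.two_two
    (h2 ▸ hf) (h2 ▸ memLp_indicator_const 2 hs (1 : ℝ) (Or.inr hμs))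
  have hsplit : ∀ ω, |s.indicator f ω| = ‖f ω‖ * ‖s.indicator (fun _ => (1 : ℝ)) ω‖ := by
    intro ω
    by_cases hω : ω ∈ s <;> simp [hω]
  have hsq : ∀ ω, ‖s.indicator (fun _ => (1 : ℝ)) ω‖ ^ (2 : ℝ) = s.indicator 1 ω := by
    intro ω
    by_cases hω : ω ∈ s <;> simp [hω]
  calc ∫ ω, |s.indicator f ω| ∂μ
      = ∫ ω, ‖f ω‖ * ‖s.indicator (fun _ => (1 : ℝ)) ω‖ ∂μ := integral_congr_ae (.of_forall hsplit)
    _ ≤ _ := hholder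
    _ = √(∫ ω, f ω ^ 2 ∂μ) * √(μ.real s) := by
      rw [integral_congr_ae (.of_forall hsq), integral_indicator_one hs]
      simp only [norm_eq_abs, rpow_two, sq_abs, ← sqrt_eq_rpow]

theorem integral_finset_sum_comp_of_identDistrib {ι β : Type*} [MeasurableSpace β]
    {Z : ι → Ω → β} {Z₀ : Ω → β} (hZ : ∀ j, IdentDistrib (Z j) Z₀ μ μ) {g : β → ℝ}
    (hg : Measurable g) (hint : Integrable (fun ω => g (Z₀ ω)) μ) (s : Finset ι) :
    ∫ ω, ∑ j ∈ s, g (Z j ω) ∂μ = s.card * ∫ ω, g (Z₀ ω) ∂μ := by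
  calc ∫ ω, ∑ j ∈ s, g (Z j ω) ∂μ = ∑ j ∈ s, ∫ ω, g (Z j ω) ∂μ :=
        integral_finsetSum s fun j _ => ((hZ j).comp hg).integrable_iff.mpr hint
    _ = ∑ _j ∈ s, ∫ ω, g (Z₀ ω) ∂μ := Finset.sum_congr rfl fun j _ => ((hZ j).comp hg).integral_eq
    _ = s.card * ∫ ω, g (Z₀ ω) ∂μ := by rw [Finset.sum_const, nsmul_eq_mul]

theorem integral_sup'_abs_partialSum_le_of_identDistrib {β : Type*} [MeasurableSpace β]
    {Z : ℕ → Ω → β} {Z₀ : Ω → β} (hZ : ∀ j, IdentDistrib (Z j) Z₀ μ μ) {g : β → ℝ}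
    (hg : Measurable g) (hint : Integrable (fun ω => g (Z₀ ω)) μ) (m : ℕ) :
    ∫ ω, (Finset.range (m + 1)).sup' Finset.nonempty_range_add_one
        (fun k => |∑ j ∈ Finset.Icc 1 k, g (Z j ω)|) ∂μ
      ≤ m * ∫ ω, |g (Z₀ ω)| ∂μ := by
  have hint_sum : Integrable (fun ω => ∑ j ∈ Finset.Icc 1 m, |g (Z j ω)|) μ :=
    integrable_finsetSum _ fun j _ => ((hZ j).comp hg.abs).integrable_iff.mpr hint.abs
  calc _ ≤ ∫ ω, ∑ j ∈ Finset.Icc 1 m, |g (Z j ω)| ∂μ :=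
        integral_mono_of_nonneg
          (Eventually.of_forall fun _ => Finset.sup'_range_abs_sum_Icc_nonneg _ m) hint_sum
          (Eventually.of_forall fun _ => Finset.sup'_range_abs_sum_Icc_le_sum_abs _ m)
    _ = m * ∫ ω, |g (Z₀ ω)| ∂μ := by
        rw [integral_finset_sum_comp_of_identDistrib hZ hg.abs hint.abs, Nat.card_Icc,
          Nat.add_sub_cancel]

end

theorem stmt8 {Ω : Type*} [MeasurableSpace Ω] (μ : Measure Ω) [IsProbabilityMeasure μ]
    (X ξ : ℕ → Ω → ℝ) (hmeas : ∀ j, Measurable (fun ω => (X j ω, ξ j ω)))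
    (hident : ∀ j, IdentDistrib (fun ω => (X j ω, ξ j ω)) (fun ω => (X 1 ω, ξ 1 ω)) μ μ)
    (hX2 : Integrable (fun ω => X 1 ω ^ 2) μ)
    (a : ℕ → ℝ) (hapos : ∀ n, 0 < a n)
    (haξ : Tendsto (fun n => a n ^ 2 * (μ {ω | (n : ℝ) < ξ 1 ω}).toReal) atTop (nhds 0))
    (T : ℝ) (hT : 0 < T) :
    Tendsto (fun n : ℕ =>
        ∫ ω, ((Finset.range (⌊T * a n ^ 2⌋₊ + 1)).sup' (by simp) fun k =>
          |∑ j ∈ Finset.Icc 1 k, if (n : ℝ) < ξ j ω then X j ω else 0|) / a n ∂μ)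
      atTop (nhds 0) := by
  set C := √(∫ ω, X 1 ω ^ 2 ∂μ)
  have hX1 : MemLp (X 1) 2 μ :=
    (memLp_two_iff_integrable_sq (hmeas 1).fst.aestronglyMeasurable).2 hX2
  have hbound : ∀ n : ℕ,
      ∫ ω, ((Finset.range (⌊T * a n ^ 2⌋₊ + 1)).sup' (by simp) fun k =>
          |∑ j ∈ Finset.Icc 1 k, if (n : ℝ) < ξ j ω then X j ω else 0|) / a n ∂μ
        ≤ T * C * √(a n ^ 2 * (μ {ω | (n : ℝ) < ξ 1 ω}).toReal) := by
    intro n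
    set A := {ω | (n : ℝ) < ξ 1 ω}
    have hA : MeasurableSet A := measurableSet_lt measurable_const (hmeas 1).snd
    have hint : Integrable (A.indicator (X 1)) μ :=
      (hX1.integrable one_le_two).indicator hA
    rw [integral_div, div_le_iff₀ (hapos n)]
    calc _ ≤ ⌊T * a n ^ 2⌋₊ * ∫ ω, |A.indicator (X 1) ω| ∂μ :=
          integral_sup'_abs_partialSum_le_of_identDistrib hident
            (g := fun q : ℝ × ℝ => if (n : ℝ) < q.2 then q.1 else 0)
            (measurable_fst.ite (measurableSet_lt measurable_const measurable_snd) measurable_const)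
            hint _
      _ ≤ (T * a n ^ 2) * (C * √(μ.real A)) :=
          mul_le_mul (Nat.floor_le (by positivity))
            (integral_abs_indicator_le_sqrt_mul_sqrt hX1 hA (measure_ne_top μ A))
            (integral_nonneg fun _ => abs_nonneg _) (by positivity)
      _ = T * C * √(a n ^ 2 * (μ A).toReal) * a n := by
          rw [sqrt_mul (sq_nonneg _), sqrt_sq (hapos n).le, measureReal_def]
          ring
  refine squeeze_zero (fun n => integral_nonneg fun _ => div_nonneg
    (Finset.sup'_range_abs_sum_Icc_nonneg _ _) (hapos n).le) hbound ?_
  simpa using ((continuous_sqrt.tendsto 0).comp haξ).const_mul (T * C)
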